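/- arXiv:2309.13764 — 2 statements merged into one kernel-verified Lean document; each statement's English description precedes it below -/
import Mathlib

section
/- For a partition λ of n, the map σ ↦ σ/d gives a bijection between the set of row-strict tableaux of shape λ with maximal divisor exactly d and the set of indivisible row-strict tableaux of shape λ/d, for each common divisor d of the parts of λ. -/
open scoped Classical

/-- The set of boxes (row, column), 0-indexed, of the Young diagram of a partition given
as a list of row lengths. -/
def cells (L : List ℕ) : Set (ℕ × ℕ) := {p | p.1 < L.length ∧ p.2 < L.getD p.1 0}

/-- `pos` encodes a tableau of shape `L` with entries `1, …, n`:  `pos i` is the (row,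
column) of the box labeled `i`.  It is injective on `{1,…,n}` with image the set of
boxes, and is normalized to `(0,0)` outside `{1,…,n}`. -/
def IsTab (L : List ℕ) (n : ℕ) (pos : ℕ → ℕ × ℕ) : Prop :=
  Set.InjOn pos (Set.Icc 1 n) ∧ pos '' Set.Icc 1 n = cells L ∧
    ∀ i, i ∉ Set.Icc 1 n → pos i = (0, 0)

/-- Row-strictness: entries increase along each row (left to right). -/
def RowStrict (n : ℕ) (pos : ℕ → ℕ × ℕ) : Prop :=
  ∀ i j, i ∈ Set.Icc 1 n → j ∈ Set.Icc 1 n →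
    (pos j).1 = (pos i).1 → (pos j).2 = (pos i).2 + 1 → i < j

/-- A row-strict tableau of shape `L` with entries `1, …, n`. -/
def IsRST (L : List ℕ) (n : ℕ) (pos : ℕ → ℕ × ℕ) : Prop :=
  IsTab L n pos ∧ RowStrict n pos

/-- `(i, j)` with `i > j` is a Springer pair: `i` lies in the same column as `j` or in a
column strictly to its left, and if the box directly right of `j` is labeled `r` then
`i < r`. -/
def SpringerPair (n : ℕ) (pos : ℕ → ℕ × ℕ) (i j : ℕ) : Prop :=
  1 ≤ j ∧ j < i ∧ i ≤ n ∧ (pos i).2 ≤ (pos j).2 ∧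
    ∀ r ∈ Set.Icc 1 n, pos r = ((pos j).1, (pos j).2 + 1) → i < r

/-- A Springer inversion is a Springer pair `(i, j)` such that if `i` is in the same
column as `j` then `i` lies strictly below `j`. -/
def SpringerInv (n : ℕ) (pos : ℕ → ℕ × ℕ) (i j : ℕ) : Prop :=
  SpringerPair n pos i j ∧ ((pos i).2 = (pos j).2 → (pos j).1 < (pos i).1)

/-- The number of Springer pairs of a tableau. -/
noncomputable def pairsCount (n : ℕ) (pos : ℕ → ℕ × ℕ) : ℕ :=
  {p : ℕ × ℕ | SpringerPair n pos p.1 p.2}.ncard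

/-- The number of Springer inversions of a tableau. -/
noncomputable def invCount (n : ℕ) (pos : ℕ → ℕ × ℕ) : ℕ :=
  {p : ℕ × ℕ | SpringerInv n pos p.1 p.2}.ncard

/-- `d` is a divisor of the tableau: `d ∣ n` and the tableau decomposes into blocks of
`d` consecutive boxes with consecutive labels, i.e. whenever `d ∤ i` the box labeled
`i + 1` is directly to the right of the box labeled `i`. -/
def TabDivisor (n d : ℕ) (pos : ℕ → ℕ × ℕ) : Prop :=
  d ∣ n ∧ ∀ i, 1 ≤ i → i < n → ¬ d ∣ i → pos (i + 1) = ((pos i).1, (pos i).2 + 1)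

/-- The quotient tableau `σ/d`: each block of `d` boxes is merged into a single box,
labeled in the same relative order (the block containing `d·m` gets label `m`). -/
def quotTab (d : ℕ) (pos : ℕ → ℕ × ℕ) : ℕ → ℕ × ℕ :=
  fun m => ((pos (d * m)).1, ((pos (d * m)).2 + 1) / d - 1)

/-- `Σ_i (i−1)·λ_i`, the dimension of the Springer fiber of Jordan type `λ`. -/
def dimB (L : List ℕ) : ℕ := ∑ i ∈ Finset.range L.length, i * L.getD i 0

/-- `L` is a partition of `n`: weakly decreasing positive parts summing to `n`. -/
def IsPartition (L : List ℕ) (n : ℕ) : Prop :=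
  L.sum = n ∧ L.Pairwise (· ≥ ·) ∧ ∀ x ∈ L, 0 < x

/-! If `d` divides `σ`, each block of `d` consecutive labels fills `d` adjacent boxes of one
row, and it starts in a column divisible by `d`: the box left of a block start cannot hold a
label inside a block (its successor would sit at the block start), so it ends a block, and one
inducts on the column. Hence `σ` is recovered from `σ/d` by expanding each box into a block, and
expansion is a two-sided inverse of `σ ↦ σ/d` that matches the shapes `λ` and `λ/d` and
row-strictness. Expansion turns a divisor `e` of `τ` into a divisor `d * e`, and divisors of a
tableau are closed under `lcm`, so `d` is the maximal divisor of the expansion of `τ` exactly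
when `τ` is indivisible. -/

open Set

section BlockArithmetic

variable {d q : ℕ}

lemma exists_mul_add_add_one_of_mem_Icc {i : ℕ} (hi : i ∈ Icc 1 (d * q)) :
    ∃ b < q, ∃ k < d, i = d * b + k + 1 := by
  obtain ⟨hi1, hiq⟩ := hi
  have hd : 0 < d := Nat.pos_of_ne_zero (by rintro rfl; simp at hiq; omega)
  refine ⟨(i - 1) / d, ?_, (i - 1) % d, Nat.mod_lt _ hd, ?_⟩
  · exact (Nat.div_lt_iff_lt_mul hd).2 (by rw [mul_comm]; omega)
  · have := Nat.div_add_mod (i - 1) d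
    omega

lemma mul_add_add_one_mem_Icc {b k : ℕ} (hb : b < q) (hk : k < d) :
    d * b + k + 1 ∈ Icc 1 (d * q) :=
  ⟨by omega, by nlinarith⟩

lemma mul_not_mem_Icc (hd : 0 < d) {m : ℕ} (hm : m ∉ Icc 1 q) : d * m ∉ Icc 1 (d * q) :=
  fun ⟨h1, hq⟩ => hm ⟨Nat.pos_of_ne_zero (by rintro rfl; simp at h1),
    Nat.le_of_mul_le_mul_left hq hd⟩

lemma mul_add_inj {a b r s : ℕ} (hr : r < d) (hs : s < d) (h : d * a + r = d * b + s) :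
    a = b ∧ r = s := by
  have hd : 0 < d := by omega
  have ha : (d * a + r) / d = a := by rw [Nat.mul_add_div hd, Nat.div_eq_of_lt hr, add_zero]
  have hb : (d * b + s) / d = b := by rw [Nat.mul_add_div hd, Nat.div_eq_of_lt hs, add_zero]
  obtain rfl : a = b := by rw [← ha, ← hb, h]
  exact ⟨rfl, by omega⟩

lemma not_dvd_mul_add_add_one {b k : ℕ} (hk : k + 1 < d) : ¬ d ∣ d * b + k + 1 := by
  rw [add_assoc, Nat.dvd_add_right (dvd_mul_right d b)]
  exact fun h => absurd (Nat.le_of_dvd (by omega) h) (by omega)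

lemma mul_succ_eq_mul_add_pred (hd : 0 < d) (b : ℕ) : d * (b + 1) = d * b + (d - 1) + 1 := by
  rw [mul_add]
  omega

lemma div_mul_add_pred_sub_one (hd : 0 < d) (c : ℕ) : (d * c + (d - 1) + 1) / d - 1 = c := by
  rw [← mul_succ_eq_mul_add_pred hd, Nat.mul_div_cancel_left _ hd, Nat.add_sub_cancel]

end BlockArithmetic

lemma mem_cells_iff {L : List ℕ} {d : ℕ} (hd : 0 < d) (hdL : ∀ x ∈ L, d ∣ x) {r c : ℕ} :
    (r, c) ∈ cells L ↔ (r, c / d) ∈ cells (L.map (· / d)) := by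
  simp only [cells, mem_ofPred_eq, List.length_map]
  refine and_congr_right fun hr => ?_
  rw [List.getD_eq_getElem (L.map (· / d)) 0 (by simpa using hr), List.getElem_map,
    List.getD_eq_getElem _ _ hr]
  obtain ⟨u, hu⟩ := hdL _ (List.getElem_mem hr)
  rw [hu, Nat.mul_div_cancel_left _ hd, Nat.div_lt_iff_lt_mul hd, mul_comm]

lemma quotTab_of_apply_eq_zero {d m : ℕ} {σ : ℕ → ℕ × ℕ} (h : σ (d * m) = (0, 0)) :
    quotTab d σ m = (0, 0) := by
  have := Nat.div_le_self 1 d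
  simp only [quotTab, h, zero_add, Prod.mk.injEq, true_and]
  omega

def expandTab (d q : ℕ) (τ : ℕ → ℕ × ℕ) : ℕ → ℕ × ℕ := fun i =>
  if i ∈ Icc 1 (d * q) then
    ((τ ((i - 1) / d + 1)).1, d * (τ ((i - 1) / d + 1)).2 + (i - 1) % d)
  else (0, 0)

section Expand

variable {L : List ℕ} {d q : ℕ} {τ : ℕ → ℕ × ℕ}

lemma expandTab_apply {b k : ℕ} (hb : b < q) (hk : k < d) :
    expandTab d q τ (d * b + k + 1) = ((τ (b + 1)).1, d * (τ (b + 1)).2 + k) := by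
  have hd : 0 < d := by omega
  rw [expandTab, if_pos (mul_add_add_one_mem_Icc hb hk), Nat.add_sub_cancel,
    Nat.mul_add_div hd, Nat.div_eq_of_lt hk, add_zero, mul_comm d b, Nat.mul_add_mod_of_lt hk]

lemma expandTab_of_not_mem {i : ℕ} (hi : i ∉ Icc 1 (d * q)) : expandTab d q τ i = (0, 0) :=
  if_neg hi

lemma expandTab_mul_succ (hd : 0 < d) {b : ℕ} (hb : b < q) :
    expandTab d q τ (d * (b + 1)) = ((τ (b + 1)).1, d * (τ (b + 1)).2 + (d - 1)) := by
  rw [mul_succ_eq_mul_add_pred hd, expandTab_apply hb (by omega)]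

lemma quotTab_expandTab (hd : 0 < d) (hτ : ∀ m ∉ Icc 1 q, τ m = (0, 0)) :
    quotTab d (expandTab d q τ) = τ := by
  funext m
  by_cases hm : m ∈ Icc 1 q
  · obtain ⟨hm1, hmq⟩ := hm
    obtain ⟨b, rfl⟩ : ∃ b, m = b + 1 := ⟨m - 1, by omega⟩
    simp only [quotTab, expandTab_mul_succ hd (show b < q by omega),
      div_mul_add_pred_sub_one hd]
  · rw [hτ m hm]
    exact quotTab_of_apply_eq_zero (expandTab_of_not_mem (mul_not_mem_Icc hd hm))

lemma injOn_expandTab_iff (hd : 0 < d) :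
    InjOn (expandTab d q τ) (Icc 1 (d * q)) ↔ InjOn τ (Icc 1 q) := by
  constructor
  · intro h m ⟨hm1, hmq⟩ m' ⟨hm1', hmq'⟩ he
    obtain ⟨b, rfl⟩ : ∃ b, m = b + 1 := ⟨m - 1, by omega⟩
    obtain ⟨b', rfl⟩ : ∃ b', m' = b' + 1 := ⟨m' - 1, by omega⟩
    have := h (mul_add_add_one_mem_Icc (k := 0) (by omega : b < q) hd)
      (mul_add_add_one_mem_Icc (k := 0) (by omega : b' < q) hd)
      (by rw [expandTab_apply (by omega) hd, expandTab_apply (by omega) hd, he])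
    rw [(mul_add_inj hd hd (by omega : d * b + 0 = d * b' + 0)).1]
  · intro h i hi i' hi' he
    obtain ⟨b, hb, k, hk, rfl⟩ := exists_mul_add_add_one_of_mem_Icc hi
    obtain ⟨b', hb', k', hk', rfl⟩ := exists_mul_add_add_one_of_mem_Icc hi'
    rw [expandTab_apply hb hk, expandTab_apply hb' hk', Prod.mk.injEq] at he
    obtain ⟨hc, rfl⟩ := mul_add_inj hk hk' he.2
    obtain rfl : b = b' := by
      have := h ⟨by omega, by omega⟩ ⟨by omega, by omega⟩ (Prod.ext he.1 hc)
      omega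
    rfl

lemma image_expandTab (hd : 0 < d) :
    expandTab d q τ '' Icc 1 (d * q) = Prod.map id (· / d) ⁻¹' (τ '' Icc 1 q) := by
  ext ⟨r, c⟩
  simp only [mem_preimage, Prod.map_apply, id_eq]
  constructor
  · rintro ⟨i, hi, he⟩
    obtain ⟨b, hb, k, hk, rfl⟩ := exists_mul_add_add_one_of_mem_Icc hi
    rw [expandTab_apply hb hk, Prod.mk.injEq] at he
    refine ⟨b + 1, ⟨by omega, by omega⟩, Prod.ext he.1 ?_⟩
    rw [← he.2, Nat.mul_add_div hd, Nat.div_eq_of_lt hk, add_zero]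
  · rintro ⟨m, ⟨hm1, hmq⟩, he⟩
    obtain ⟨b, rfl⟩ : ∃ b, m = b + 1 := ⟨m - 1, by omega⟩
    refine ⟨d * b + c % d + 1, mul_add_add_one_mem_Icc (by omega) (Nat.mod_lt c hd), ?_⟩
    rw [expandTab_apply (by omega) (Nat.mod_lt c hd), he, Nat.div_add_mod]

lemma cells_eq_preimage (hd : 0 < d) (hdL : ∀ x ∈ L, d ∣ x) :
    cells L = Prod.map id (· / d) ⁻¹' cells (L.map (· / d)) := by
  ext ⟨r, c⟩
  exact mem_cells_iff hd hdL

lemma isTab_expandTab_iff (hd : 0 < d) (hdL : ∀ x ∈ L, d ∣ x)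
    (hτ : ∀ m ∉ Icc 1 q, τ m = (0, 0)) :
    IsTab L (d * q) (expandTab d q τ) ↔ IsTab (L.map (· / d)) q τ := by
  have hsurj : Function.Surjective (Prod.map id (· / d) : ℕ × ℕ → ℕ × ℕ) :=
    Function.surjective_id.prodMap fun c => ⟨d * c, Nat.mul_div_cancel_left c hd⟩
  unfold IsTab
  rw [injOn_expandTab_iff hd, image_expandTab hd, cells_eq_preimage hd hdL,
    (preimage_injective.2 hsurj).eq_iff]
  exact and_congr_right' (and_congr_right' (iff_of_true (fun _ => expandTab_of_not_mem) hτ))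

lemma RowStrict.of_expandTab (hd : 0 < d) (h : RowStrict (d * q) (expandTab d q τ)) :
    RowStrict q τ := by
  intro m m' ⟨hm1, hmq⟩ ⟨hm1', hmq'⟩ hrow hcol
  obtain ⟨b, rfl⟩ : ∃ b, m = b + 1 := ⟨m - 1, by omega⟩
  obtain ⟨b', rfl⟩ : ∃ b', m' = b' + 1 := ⟨m' - 1, by omega⟩
  have hlt := h _ _ (mul_add_add_one_mem_Icc (by omega : b < q) (by omega : d - 1 < d))
    (mul_add_add_one_mem_Icc (k := 0) (by omega : b' < q) hd)
    (by rw [expandTab_apply (by omega) (by omega), expandTab_apply (by omega) hd, hrow])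
    (by rw [expandTab_apply (by omega) (by omega), expandTab_apply (by omega) hd, hcol,
      mul_add]; omega)
  have : d * b < d * b' := by omega
  have := Nat.lt_of_mul_lt_mul_left this
  omega

lemma RowStrict.expandTab (hd : 0 < d) (hinj : InjOn τ (Icc 1 q)) (h : RowStrict q τ) :
    RowStrict (d * q) (expandTab d q τ) := by
  intro i i' hi hi' hrow hcol
  obtain ⟨b, hb, k, hk, rfl⟩ := exists_mul_add_add_one_of_mem_Icc hi
  obtain ⟨b', hb', k', hk', rfl⟩ := exists_mul_add_add_one_of_mem_Icc hi'
  rw [expandTab_apply hb hk, expandTab_apply hb' hk'] at hrow hcol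
  dsimp only at hrow hcol
  by_cases hkd : k + 1 < d
  · obtain ⟨hc, rfl⟩ := mul_add_inj hk' hkd hcol
    obtain rfl : b' = b := by
      have := hinj ⟨by omega, by omega⟩ ⟨by omega, by omega⟩ (Prod.ext hrow hc)
      omega
    omega
  · obtain ⟨hc, -⟩ := mul_add_inj hk' hd
      (show d * (τ (b' + 1)).2 + k' = d * ((τ (b + 1)).2 + 1) + 0 by rw [mul_add]; omega)
    have hlt := h _ _ ⟨by omega, by omega⟩ ⟨by omega, by omega⟩ hrow hc
    have : d * (b + 1) ≤ d * b' := Nat.mul_le_mul_left d (by omega)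
    rw [mul_add] at this
    omega

lemma isRST_expandTab_iff (hd : 0 < d) (hdL : ∀ x ∈ L, d ∣ x)
    (hτ : ∀ m ∉ Icc 1 q, τ m = (0, 0)) :
    IsRST L (d * q) (expandTab d q τ) ↔ IsRST (L.map (· / d)) q τ := by
  unfold IsRST
  rw [isTab_expandTab_iff hd hdL hτ]
  exact and_congr_right fun h => ⟨RowStrict.of_expandTab hd, RowStrict.expandTab hd h.1⟩

lemma tabDivisor_expandTab : TabDivisor (d * q) d (expandTab d q τ) := by
  refine ⟨dvd_mul_right d q, fun i hi hiq hdi => ?_⟩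
  obtain ⟨b, hb, k, hk, rfl⟩ := exists_mul_add_add_one_of_mem_Icc (i := i) ⟨hi, hiq.le⟩
  have hk1 : k + 1 < d := by
    by_contra hk1
    exact hdi ⟨b + 1, by rw [mul_add]; omega⟩
  rw [expandTab_apply hb hk, show d * b + k + 1 + 1 = d * b + (k + 1) + 1 by omega,
    expandTab_apply hb hk1]
  rfl

lemma expandTab_mul_succ_add_one_iff (hd : 0 < d) {b : ℕ} (hb : b + 1 < q) :
    expandTab d q τ (d * (b + 1) + 1) =
        ((expandTab d q τ (d * (b + 1))).1, (expandTab d q τ (d * (b + 1))).2 + 1) ↔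
      τ (b + 1 + 1) = ((τ (b + 1)).1, (τ (b + 1)).2 + 1) := by
  rw [show d * (b + 1) + 1 = d * (b + 1) + 0 + 1 from rfl, expandTab_apply hb hd,
    expandTab_mul_succ hd (by omega), Prod.ext_iff, Prod.ext_iff]
  dsimp only
  refine and_congr_right' ⟨fun h => ?_, fun h => by rw [h, mul_add]; omega⟩
  exact (mul_add_inj hd hd (by rw [mul_add]; omega :
    d * (τ (b + 1 + 1)).2 + 0 = d * ((τ (b + 1)).2 + 1) + 0)).1

lemma tabDivisor_mul_expandTab_iff (hd : 0 < d) {e : ℕ} :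
    TabDivisor (d * q) (d * e) (expandTab d q τ) ↔ TabDivisor q e τ := by
  unfold TabDivisor
  rw [Nat.mul_dvd_mul_iff_left hd]
  refine and_congr_right fun _ => ⟨fun h m hm hmq hem => ?_, fun h i hi hiq hde => ?_⟩
  · obtain ⟨b, rfl⟩ : ∃ b, m = b + 1 := ⟨m - 1, by omega⟩
    refine (expandTab_mul_succ_add_one_iff hd hmq).1 (h _ ?_ ?_ ?_)
    · nlinarith
    · exact Nat.mul_lt_mul_of_pos_left hmq hd
    · rwa [Nat.mul_dvd_mul_iff_left hd]
  · by_cases hdi : d ∣ i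
    · obtain ⟨m, rfl⟩ := hdi
      obtain ⟨b, rfl⟩ : ∃ b, m = b + 1 := ⟨m - 1, by rcases m with _ | m <;> simp_all⟩
      have hbq : b + 1 < q := Nat.lt_of_mul_lt_mul_left hiq
      exact (expandTab_mul_succ_add_one_iff hd hbq).2
        (h _ (by omega) hbq fun hem => hde (mul_dvd_mul_left d hem))
    · exact tabDivisor_expandTab.2 i hi hiq hdi

end Expand

namespace TabDivisor

variable {L : List ℕ} {d q : ℕ} {σ : ℕ → ℕ × ℕ}

lemma lcm {n a b : ℕ} (ha : TabDivisor n a σ) (hb : TabDivisor n b σ) :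
    TabDivisor n (Nat.lcm a b) σ := by
  refine ⟨Nat.lcm_dvd ha.1 hb.1, fun i hi hin hl => ?_⟩
  by_cases hai : a ∣ i
  · exact hb.2 i hi hin fun hbi => hl (Nat.lcm_dvd hai hbi)
  · exact ha.2 i hi hin hai

lemma apply_mul_add (h : TabDivisor (d * q) d σ) {b k : ℕ} (hb : b < q) (hk : k < d) :
    σ (d * b + k + 1) = ((σ (d * b + 1)).1, (σ (d * b + 1)).2 + k) := by
  induction k with
  | zero => rfl
  | succ k ih =>
    have hmem := (mul_add_add_one_mem_Icc hb hk).2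
    rw [← add_assoc, h.2 _ (by omega) (by omega) (not_dvd_mul_add_add_one hk), ih (by omega)]
    rfl

lemma dvd_snd (hd : 0 < d) (hσ : IsTab L (d * q) σ) (h : TabDivisor (d * q) d σ) {b : ℕ}
    (hb : b < q) : d ∣ (σ (d * b + 1)).2 := by
  induction hs : (σ (d * b + 1)).2 using Nat.strong_induction_on generalizing b with
  | _ s ih =>
  obtain _ | s := s
  · exact dvd_zero d
  have hcell : σ (d * b + 1) ∈ cells L :=
    hσ.2.1 ▸ mem_image_of_mem σ (mul_add_add_one_mem_Icc (k := 0) hb hd)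
  obtain ⟨j, hj, hσj⟩ : ((σ (d * b + 1)).1, s) ∈ σ '' Icc 1 (d * q) := by
    rw [hσ.2.1]
    exact ⟨hcell.1, by have := hcell.2; rw [hs] at this; exact Nat.lt_of_succ_lt this⟩
  obtain ⟨b', hb', k, hk, rfl⟩ := exists_mul_add_add_one_of_mem_Icc hj
  obtain rfl : k = d - 1 := by
    by_contra hk'
    have hk1 : k + 1 < d := by omega
    have hsucc := mul_add_add_one_mem_Icc hb' hk1
    have hnext :=
      h.2 _ hj.1 (by have := hsucc.2; omega) (not_dvd_mul_add_add_one (b := b') hk1)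
    rw [hσj, ← hs] at hnext
    have := hσ.1 hsucc (mul_add_add_one_mem_Icc (k := 0) hb hd) hnext
    have := (mul_add_inj hk1 hd (by omega : d * b' + (k + 1) = d * b + 0)).2
    omega
  have hend := h.apply_mul_add hb' hk
  rw [hσj, Prod.mk.injEq] at hend
  obtain ⟨c, hc⟩ := ih _ (by omega) hb' rfl
  exact ⟨c + 1, by rw [mul_add]; omega⟩

end TabDivisor

section Quotient

variable {L : List ℕ} {d q : ℕ} {σ : ℕ → ℕ × ℕ}

lemma quotTab_of_not_mem (hd : 0 < d) (hσ : ∀ i ∉ Icc 1 (d * q), σ i = (0, 0)) {m : ℕ}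
    (hm : m ∉ Icc 1 q) : quotTab d σ m = (0, 0) :=
  quotTab_of_apply_eq_zero (hσ _ (mul_not_mem_Icc hd hm))

lemma expandTab_quotTab (hd : 0 < d) (hσ : IsTab L (d * q) σ) (h : TabDivisor (d * q) d σ) :
    expandTab d q (quotTab d σ) = σ := by
  funext i
  by_cases hi : i ∈ Icc 1 (d * q)
  · obtain ⟨b, hb, k, hk, rfl⟩ := exists_mul_add_add_one_of_mem_Icc hi
    obtain ⟨c, hc⟩ := h.dvd_snd hd hσ hb
    have hquot : quotTab d σ (b + 1) = ((σ (d * b + 1)).1, c) := by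
      simp only [quotTab, mul_succ_eq_mul_add_pred hd,
        h.apply_mul_add hb (by omega : d - 1 < d), hc, div_mul_add_pred_sub_one hd]
    rw [expandTab_apply hb hk, hquot, h.apply_mul_add hb hk, hc]
  · rw [expandTab_of_not_mem hi, hσ.2.2 i hi]

end Quotient

lemma isGreatest_tabDivisor_expandTab_iff {d q : ℕ} {τ : ℕ → ℕ × ℕ} (hd : 0 < d) :
    IsGreatest {e | 0 < e ∧ TabDivisor (d * q) e (expandTab d q τ)} d ↔
      ∀ e, 0 < e → TabDivisor q e τ → e = 1 := by
  constructor
  · intro hmax e he hdiv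
    have := hmax.2 ⟨Nat.mul_pos hd he, (tabDivisor_mul_expandTab_iff hd).2 hdiv⟩
    have := Nat.le_of_mul_le_mul_left (a := e) (b := 1) (by rwa [mul_one]) hd
    omega
  · refine fun hind => ⟨⟨hd, tabDivisor_expandTab⟩, fun e ⟨he, hdiv⟩ => ?_⟩
    obtain ⟨f, hf⟩ : d ∣ Nat.lcm d e := Nat.dvd_lcm_left d e
    have hlcm := tabDivisor_expandTab.lcm hdiv
    rw [hf, tabDivisor_mul_expandTab_iff hd] at hlcm
    have hf0 : 0 < f := Nat.pos_of_mul_pos_left (hf ▸ Nat.lcm_pos hd he)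
    rw [hind f hf0 hlcm, mul_one] at hf
    exact Nat.le_of_dvd hd (hf ▸ Nat.dvd_lcm_right d e)

theorem stmt16_general (L : List ℕ) (n d : ℕ) (hL : IsPartition L n)
    (hd : 0 < d) (hdL : ∀ x ∈ L, d ∣ x) :
    Set.BijOn (quotTab d)
      {σ : ℕ → ℕ × ℕ | IsRST L n σ ∧ IsGreatest {e : ℕ | 0 < e ∧ TabDivisor n e σ} d}
      {τ : ℕ → ℕ × ℕ | IsRST (L.map (· / d)) (n / d) τ ∧
        ∀ e, 0 < e → TabDivisor (n / d) e τ → e = 1} := by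
  obtain ⟨q, rfl⟩ : d ∣ n := hL.1 ▸ List.dvd_sum hdL
  rw [Nat.mul_div_cancel_left q hd]
  refine InvOn.bijOn (f' := expandTab d q)
    ⟨fun σ ⟨hσ, hmax⟩ => ?_, fun τ ⟨hτ, _⟩ => ?_⟩ ?_ ?_
  · exact expandTab_quotTab hd hσ.1 hmax.1.2
  · exact quotTab_expandTab hd hτ.1.2.2
  · rintro σ ⟨hσ, hmax⟩
    have hnorm : ∀ m ∉ Icc 1 q, quotTab d σ m = (0, 0) := fun _ =>
      quotTab_of_not_mem hd hσ.1.2.2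
    have hexpand := expandTab_quotTab hd hσ.1 hmax.1.2
    rw [← hexpand] at hσ hmax
    exact ⟨(isRST_expandTab_iff hd hdL hnorm).1 hσ,
      (isGreatest_tabDivisor_expandTab_iff hd).1 hmax⟩
  · rintro τ ⟨hτ, hind⟩
    exact ⟨(isRST_expandTab_iff hd hdL hτ.1.2.2).2 hτ,
      (isGreatest_tabDivisor_expandTab_iff hd).2 hind⟩

/-- For each common divisor `d` of the parts of `λ ⊢ n`, the map `σ ↦ σ/d` is a
bijection between the row-strict tableaux of shape `λ` with maximal divisor exactly `d`
and the indivisible row-strict tableaux of shape `λ/d`. -/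
theorem stmt16 (L : List ℕ) (n d : ℕ) (hL : IsPartition L n) (hn : 0 < n)
    (hd : 0 < d) (hdL : ∀ x ∈ L, d ∣ x) :
    Set.BijOn (quotTab d)
      {σ : ℕ → ℕ × ℕ | IsRST L n σ ∧ IsGreatest {e : ℕ | 0 < e ∧ TabDivisor n e σ} d}
      {τ : ℕ → ℕ × ℕ | IsRST (L.map (· / d)) (n / d) τ ∧
        ∀ e, 0 < e → TabDivisor (n / d) e τ → e = 1} :=
  stmt16_general L n d hL hd hdL
end

section
/- Let σ be a row-strict tableau of shape λ ⊢ n, and suppose (i,j) with i > j is a Springer pair of σ that is not a Springer inversion. Then d divides both i and j for every divisor d of σ; in particular, both i and j label boxes at the end of their blocks. -/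
open scoped Classical

/-!
Inside a block the labels advance by one per box to the right, and the first box of a row
starts a block, so the column `c` of the box labeled `m` satisfies `c + 1 ≡ m [MOD d]`.
The condition on the right neighbour of `j` in a Springer pair forces `j` to end a block,
i.e. `d ∣ j`; a non-inversion has `i` in the column of `j`, hence `i ≡ j ≡ 0 [MOD d]`.
-/

lemma IsTab.exists_left_neighbor {L : List ℕ} {n : ℕ} {σ : ℕ → ℕ × ℕ} (hσ : IsTab L n σ)
    {m c : ℕ} (hm : m ∈ Set.Icc 1 n) (hc : (σ m).2 = c + 1) :
    ∃ k ∈ Set.Icc 1 n, σ m = ((σ k).1, (σ k).2 + 1) := by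
  have hmcell : σ m ∈ cells L := hσ.2.1 ▸ Set.mem_image_of_mem σ hm
  have hleft : ((σ m).1, c) ∈ σ '' Set.Icc 1 n := by
    rw [hσ.2.1]
    exact ⟨hmcell.1, by have := hmcell.2; simp only at this ⊢; omega⟩
  obtain ⟨k, hk, hkpos⟩ := hleft
  exact ⟨k, hk, by rw [hkpos, ← hc]⟩

namespace TabDivisor

variable {L : List ℕ} {n d : ℕ} {σ : ℕ → ℕ × ℕ}

lemma eq_right_of_not_dvd (hdiv : TabDivisor n d σ) {m : ℕ} (hm : m ∈ Set.Icc 1 n)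
    (hdm : ¬ d ∣ m - 1) : σ m = ((σ (m - 1)).1, (σ (m - 1)).2 + 1) := by
  obtain ⟨hm1, hmn⟩ := hm
  have hm2 : m ≠ 1 := by rintro rfl; exact hdm (dvd_zero d)
  have := hdiv.2 (m - 1) (by omega) (by omega) hdm
  rwa [Nat.sub_add_cancel hm1] at this

lemma succ_modEq_of_eq_right (hσ : IsTab L n σ) (hdiv : TabDivisor n d σ) {k m : ℕ}
    (hk : k ∈ Set.Icc 1 n) (hm : m ∈ Set.Icc 1 n) (hkm : σ m = ((σ k).1, (σ k).2 + 1)) :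
    k + 1 ≡ m [MOD d] := by
  by_cases hdk : d ∣ k
  · -- otherwise `σ m` would be the right neighbour of both `σ k` and `σ (m - 1)`
    have hdm : d ∣ m - 1 := by
      by_contra hdm
      have hprev : σ (m - 1) = σ k := by
        have := hdiv.eq_right_of_not_dvd hm hdm
        rw [hkm, Prod.mk.injEq] at this
        exact Prod.ext this.1.symm (by omega)
      have hm1 : m ≠ 1 := by rintro rfl; exact hdm (dvd_zero d)
      have hmem : m - 1 ∈ Set.Icc 1 n := ⟨by have := hm.1; omega, by have := hm.2; omega⟩
      exact hdm (hσ.1 hmem hk hprev ▸ hdk)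
    calc k + 1 ≡ 0 + 1 [MOD d] := (Nat.modEq_zero_iff_dvd.2 hdk).add_right 1
      _ ≡ m [MOD d] := (Nat.modEq_iff_dvd' hm.1).2 hdm
  · have hkn : k < n := lt_of_le_of_ne hk.2 fun h => hdk (h ▸ hdiv.1)
    have hnext : σ (k + 1) = σ m := by rw [hdiv.2 k hk.1 hkn hdk, hkm]
    rw [hσ.1 ⟨by omega, by omega⟩ hm hnext]

lemma col_succ_modEq (hσ : IsTab L n σ) (hdiv : TabDivisor n d σ) {m : ℕ}
    (hm : m ∈ Set.Icc 1 n) : (σ m).2 + 1 ≡ m [MOD d] := by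
  induction hc : (σ m).2 generalizing m with
  | zero =>
    have hdm : d ∣ m - 1 := by
      by_contra hdm
      have := congrArg Prod.snd (hdiv.eq_right_of_not_dvd hm hdm)
      omega
    exact (Nat.modEq_iff_dvd' hm.1).2 hdm
  | succ c ih =>
    obtain ⟨k, hk, hkm⟩ := hσ.exists_left_neighbor hm hc
    have hck : (σ k).2 = c := by rw [hkm] at hc; omega
    calc c + 1 + 1 ≡ k + 1 [MOD d] := (ih hk hck).add_right 1
      _ ≡ m [MOD d] := succ_modEq_of_eq_right hσ hdiv hk hm hkm

end TabDivisor

lemma SpringerPair.dvd_right {n d i j : ℕ} {σ : ℕ → ℕ × ℕ} (hpair : SpringerPair n σ i j)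
    (hdiv : TabDivisor n d σ) : d ∣ j := by
  obtain ⟨hj1, hji, hin, -, hright⟩ := hpair
  by_contra hdj
  have := hright (j + 1) ⟨by omega, by omega⟩ (hdiv.2 j hj1 (by omega) hdj)
  omega

theorem stmt19_general (L : List ℕ) (n : ℕ) (σ : ℕ → ℕ × ℕ)
    (hσ : IsRST L n σ) (i j : ℕ) (hpair : SpringerPair n σ i j)
    (hnotinv : ¬ SpringerInv n σ i j) (d : ℕ) (hdiv : TabDivisor n d σ) :
    d ∣ i ∧ d ∣ j := by
  have hcol : (σ i).2 = (σ j).2 := by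
    by_contra h
    exact hnotinv ⟨hpair, fun h' => absurd h' h⟩
  have hdj : d ∣ j := hpair.dvd_right hdiv
  obtain ⟨hj1, hji, hin, -⟩ := hpair
  have hmod : j ≡ i [MOD d] :=
    calc j ≡ (σ j).2 + 1 [MOD d] := (hdiv.col_succ_modEq hσ.1 ⟨hj1, by omega⟩).symm
      _ = (σ i).2 + 1 := by rw [hcol]
      _ ≡ i [MOD d] := hdiv.col_succ_modEq hσ.1 ⟨by omega, hin⟩
  exact ⟨(hmod.dvd_iff dvd_rfl).1 hdj, hdj⟩

/-- If `(i, j)` is a Springer pair of a row-strict tableau `σ` that is not a Springer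
inversion, then every divisor `d` of `σ` divides both `i` and `j`; in particular `i` and
`j` label boxes at the end of their blocks. -/
theorem stmt19 (L : List ℕ) (n : ℕ) (hL : IsPartition L n) (σ : ℕ → ℕ × ℕ)
    (hσ : IsRST L n σ) (i j : ℕ) (hpair : SpringerPair n σ i j)
    (hnotinv : ¬ SpringerInv n σ i j) (d : ℕ) (hd : 0 < d) (hdiv : TabDivisor n d σ) :
    d ∣ i ∧ d ∣ j :=
  stmt19_general L n σ hσ i j hpair hnotinv d hdiv
end
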